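/- arXiv:1907.09366 — 2 statements merged into one kernel-verified Lean document; each statement's English description precedes it below -/
import Mathlib

section
/- Let f be a holomorphic self-map of the open unit disc 𝔻 whose Denjoy–Wolff point ζ lies on the boundary of 𝔻 (|ζ| = 1). Then there exist neighbourhoods 𝒰₁, 𝒰₂, … of f in the space of holomorphic self-maps of 𝔻 with the compact-open topology such that whenever fₙ ∈ 𝒰ₙ for all n, the left-composition sequence Fₙ = fₙ ∘ fₙ₋₁ ∘ ⋯ ∘ f₁ converges locally uniformly on 𝔻 to the constant ζ. -/
open Complex Set Filter Metric

/-- The open unit disc in the complex plane. -/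
def unitDisc : Set ℂ := {z : ℂ | ‖z‖ < 1}

/-- Inverse hyperbolic tangent. -/
noncomputable def artanh (x : ℝ) : ℝ := (1 / 2) * Real.log ((1 + x) / (1 - x))

/-- The hyperbolic distance on the unit disc, induced by the Riemannian metric
`2|dz|/(1-|z|²)`. -/
noncomputable def hdist (z w : ℂ) : ℝ :=
  2 * artanh ‖(z - w) / (1 - (starRingEnd ℂ) w * z)‖

/-- Left compositions: `leftComp f n = f (n-1) ∘ ⋯ ∘ f 1 ∘ f 0`, so that `f k`
plays the role of the `(k+1)`-st map `f_{k+1}` of the sequence. -/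
def leftComp (f : ℕ → ℂ → ℂ) : ℕ → ℂ → ℂ
  | 0 => id
  | n + 1 => f n ∘ leftComp f n

/-- Right compositions: `rightComp g n = g 0 ∘ g 1 ∘ ⋯ ∘ g (n-1)`, so that `g k`
plays the role of the `(k+1)`-st map `g_{k+1}` of the sequence. -/
def rightComp (g : ℕ → ℂ → ℂ) : ℕ → ℂ → ℂ
  | 0 => id
  | n + 1 => rightComp g n ∘ g n

open scoped Topology ComplexConjugate

/-!
The compositions `Fₙ` are tracked in the pseudo-hyperbolic distance `ρ(a, b) = |a - b| / |1 - b̄a|`,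
which holomorphic self-maps of `𝔻` do not increase (Schwarz–Pick). If `fₙ` is close enough to `f`
on a compact set containing the `ρ`-ball of radius `1/4` around `fⁿ(0)`, then by a weak triangle
inequality for `ρ` the point `Fₙ(0)` stays in that ball: the errors `2⁻ⁿ/16` are summable. A point
at `ρ`-distance at most `β < 1` from `a` lies within `β(1 - |a|²)/(1 - β)` of `a`, so as
`fⁿ(0) → ζ ∈ ∂𝔻` we get `Fₙ(0) → ζ`; and `ρ(Fₙ z, Fₙ 0) ≤ |z|` upgrades this to locally uniform
convergence.
-/

lemma unitDisc_eq_ball : unitDisc = ball (0 : ℂ) 1 := by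
  ext z; simp [unitDisc]

noncomputable def blaschkeFactor (b z : ℂ) : ℂ := (z - b) / (1 - conj b * z)

/-- The pseudo-hyperbolic distance: `hdist z w = 2 * artanh (pseudoHypDist z w)`. -/
noncomputable def pseudoHypDist (a b : ℂ) : ℝ := ‖blaschkeFactor b a‖

lemma pseudoHypDist_eq_div (a b : ℂ) :
    pseudoHypDist a b = ‖a - b‖ / ‖1 - conj b * a‖ := norm_div _ _

lemma pseudoHypDist_nonneg (a b : ℂ) : 0 ≤ pseudoHypDist a b := norm_nonneg _

lemma pseudoHypDist_zero_right (a : ℂ) : pseudoHypDist a 0 = ‖a‖ := by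
  simp [pseudoHypDist, blaschkeFactor]

lemma pseudoHypDist_self (a : ℂ) : pseudoHypDist a a = 0 := by
  simp [pseudoHypDist, blaschkeFactor]

lemma pseudoHypDist_comm (a b : ℂ) : pseudoHypDist a b = pseudoHypDist b a := by
  rw [pseudoHypDist_eq_div, pseudoHypDist_eq_div, norm_sub_rev,
    ← Complex.norm_conj (1 - conj b * a)]
  simp [mul_comm]

lemma one_sub_mul_norm_le_norm_one_sub_conj_mul (a b : ℂ) :
    1 - ‖b‖ * ‖a‖ ≤ ‖1 - conj b * a‖ := by
  simpa using norm_sub_norm_le (1 : ℂ) (conj b * a)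

lemma norm_one_sub_conj_mul_pos {a b : ℂ} (h : ‖b‖ * ‖a‖ < 1) :
    0 < ‖1 - conj b * a‖ :=
  (sub_pos.2 h).trans_le (one_sub_mul_norm_le_norm_one_sub_conj_mul a b)

lemma normSq_one_sub_conj_mul_sub_normSq_sub (a b : ℂ) :
    normSq (1 - conj b * a) - normSq (a - b) = (1 - normSq a) * (1 - normSq b) := by
  simp only [normSq_apply, sub_re, sub_im, mul_re, mul_im, conj_re, conj_im, one_re, one_im]
  ring

lemma pseudoHypDist_lt_one {a b : ℂ} (ha : ‖a‖ < 1) (hb : ‖b‖ < 1) :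
    pseudoHypDist a b < 1 := by
  have hsq : ‖a - b‖ ^ 2 < ‖1 - conj b * a‖ ^ 2 := by
    have := normSq_one_sub_conj_mul_sub_normSq_sub a b
    simp only [normSq_eq_norm_sq] at this
    nlinarith [mul_pos (sub_pos.2 (pow_lt_one₀ (norm_nonneg a) ha two_ne_zero))
      (sub_pos.2 (pow_lt_one₀ (norm_nonneg b) hb two_ne_zero))]
  rw [pseudoHypDist_eq_div, div_lt_one (norm_one_sub_conj_mul_pos (by nlinarith [norm_nonneg a, norm_nonneg b]))]
  exact lt_of_pow_lt_pow_left₀ 2 (norm_nonneg _) hsq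

lemma mapsTo_blaschkeFactor {b : ℂ} (hb : ‖b‖ < 1) :
    MapsTo (blaschkeFactor b) unitDisc unitDisc :=
  fun _ hz => pseudoHypDist_lt_one hz hb

lemma differentiableOn_blaschkeFactor {b : ℂ} (hb : ‖b‖ < 1) :
    DifferentiableOn ℂ (blaschkeFactor b) unitDisc :=
  DifferentiableOn.div (by fun_prop) (by fun_prop) fun z hz =>
    norm_pos_iff.1 (norm_one_sub_conj_mul_pos (by nlinarith [norm_nonneg z, norm_nonneg b, hz.out]))

lemma blaschkeFactor_self (b : ℂ) : blaschkeFactor b b = 0 := by simp [blaschkeFactor]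

lemma blaschkeFactor_neg_zero (b : ℂ) : blaschkeFactor (-b) 0 = b := by simp [blaschkeFactor]

lemma blaschkeFactor_neg_blaschkeFactor {b z : ℂ} (hb : ‖b‖ < 1) (hz : ‖z‖ < 1) :
    blaschkeFactor (-b) (blaschkeFactor b z) = z := by
  have hden : 1 - conj b * z ≠ 0 :=
    norm_pos_iff.1 (norm_one_sub_conj_mul_pos (by nlinarith [norm_nonneg z, norm_nonneg b]))
  have hbb : 1 - conj b * b ≠ 0 := by
    rw [conj_mul', ← ofReal_pow, ← ofReal_one, ← ofReal_sub, ofReal_ne_zero, sub_ne_zero]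
    exact (pow_lt_one₀ (norm_nonneg b) hb two_ne_zero).ne'
  have hnum : (z - b) / (1 - conj b * z) - -b = z * (1 - conj b * b) / (1 - conj b * z) := by
    rw [eq_div_iff hden, sub_mul, div_mul_cancel₀ _ hden]
    ring
  have hdenom : 1 - conj (-b) * ((z - b) / (1 - conj b * z)) =
      (1 - conj b * b) / (1 - conj b * z) := by
    rw [eq_div_iff hden, sub_mul, mul_assoc, div_mul_cancel₀ _ hden, map_neg]
    ring
  rw [blaschkeFactor, blaschkeFactor, hnum, hdenom, div_div_div_cancel_right₀ hden,
    mul_div_cancel_right₀ _ hbb]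

/-- The Schwarz–Pick lemma. -/
lemma pseudoHypDist_le_of_mapsTo {f : ℂ → ℂ} (hf : DifferentiableOn ℂ f unitDisc)
    (hfmap : MapsTo f unitDisc unitDisc) {a b : ℂ} (ha : ‖a‖ < 1) (hb : ‖b‖ < 1) :
    pseudoHypDist (f a) (f b) ≤ pseudoHypDist a b := by
  have hb' : ‖-b‖ < 1 := by rwa [norm_neg]
  have hfb : ‖f b‖ < 1 := hfmap hb
  -- `g` fixes `0`, so the Schwarz lemma applies to it.
  set g := blaschkeFactor (f b) ∘ f ∘ blaschkeFactor (-b)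
  have hgmap : MapsTo g unitDisc unitDisc :=
    (mapsTo_blaschkeFactor hfb).comp (hfmap.comp (mapsTo_blaschkeFactor hb'))
  have hg : DifferentiableOn ℂ g unitDisc :=
    (differentiableOn_blaschkeFactor hfb).comp
      (hf.comp (differentiableOn_blaschkeFactor hb') (mapsTo_blaschkeFactor hb'))
      (hfmap.comp (mapsTo_blaschkeFactor hb'))
  have hg0 : g 0 = 0 := by simp [g, blaschkeFactor_neg_zero, blaschkeFactor_self]
  rw [unitDisc_eq_ball] at hg hgmap
  have := Complex.norm_le_norm_of_mapsTo_ball hg (hgmap.mono_right ball_subset_closedBall) hg0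
    (mapsTo_blaschkeFactor hb ha)
  simpa [g, pseudoHypDist, blaschkeFactor_neg_blaschkeFactor hb ha] using this

lemma pseudoHypDist_blaschkeFactor {a b c : ℂ} (ha : ‖a‖ < 1) (hb : ‖b‖ < 1) (hc : ‖c‖ < 1) :
    pseudoHypDist (blaschkeFactor b a) (blaschkeFactor b c) = pseudoHypDist a c := by
  have hb' : ‖-b‖ < 1 := by rwa [norm_neg]
  refine le_antisymm (pseudoHypDist_le_of_mapsTo (differentiableOn_blaschkeFactor hb)
    (mapsTo_blaschkeFactor hb) ha hc) ?_
  have := pseudoHypDist_le_of_mapsTo (differentiableOn_blaschkeFactor hb')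
    (mapsTo_blaschkeFactor hb') (mapsTo_blaschkeFactor hb ha) (mapsTo_blaschkeFactor hb hc)
  rwa [blaschkeFactor_neg_blaschkeFactor hb ha, blaschkeFactor_neg_blaschkeFactor hb hc] at this

lemma pseudoHypDist_le_norm_add_div {x y : ℂ} (h : ‖x‖ * ‖y‖ < 1) :
    pseudoHypDist x y ≤ (‖x‖ + ‖y‖) / (1 - ‖x‖ * ‖y‖) := by
  rw [pseudoHypDist_eq_div]
  exact div_le_div₀ (by positivity) (norm_sub_le x y) (sub_pos.2 h)
    (mul_comm ‖x‖ ‖y‖ ▸ one_sub_mul_norm_le_norm_one_sub_conj_mul x y)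

/-- The weak triangle inequality; the sharp one has `1 + _` in the denominator. -/
lemma pseudoHypDist_triangle {a b c : ℂ} (ha : ‖a‖ < 1) (hb : ‖b‖ < 1) (hc : ‖c‖ < 1) :
    pseudoHypDist a c ≤
      (pseudoHypDist a b + pseudoHypDist b c) / (1 - pseudoHypDist a b * pseudoHypDist b c) := by
  -- Move `b` to `0`.
  have hab := pseudoHypDist_lt_one ha hb
  have hbc := pseudoHypDist_lt_one hb hc
  rw [← pseudoHypDist_blaschkeFactor ha hb hc, pseudoHypDist_comm b c]
  exact pseudoHypDist_le_norm_add_div (by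
    rw [pseudoHypDist_comm] at hbc
    exact mul_lt_one_of_nonneg_of_lt_one_left (norm_nonneg _) hab hbc.le)

lemma pseudoHypDist_le_norm_sub_div {a b : ℂ} (ha : ‖a‖ ≤ 1) (hb : ‖b‖ < 1) :
    pseudoHypDist a b ≤ ‖a - b‖ / (1 - ‖b‖) := by
  rw [pseudoHypDist_eq_div]
  refine div_le_div_of_nonneg_left (norm_nonneg _) (sub_pos.2 hb) ?_
  calc 1 - ‖b‖ ≤ 1 - ‖b‖ * ‖a‖ := by nlinarith [norm_nonneg b]
    _ ≤ _ := one_sub_mul_norm_le_norm_one_sub_conj_mul a b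

lemma norm_sub_le_of_pseudoHypDist_le {a b : ℂ} {β : ℝ} (ha : ‖a‖ < 1) (hb : ‖b‖ < 1)
    (hβ : β < 1) (h : pseudoHypDist a b ≤ β) :
    ‖a - b‖ ≤ β * (1 - ‖b‖ ^ 2) / (1 - β) := by
  have hβ0 : 0 ≤ β := (pseudoHypDist_nonneg a b).trans h
  have hden := norm_one_sub_conj_mul_pos (a := a) (b := b) (by nlinarith [norm_nonneg a, norm_nonneg b])
  have hbb : ‖1 - conj b * b‖ = 1 - ‖b‖ ^ 2 := by
    rw [conj_mul', ← ofReal_pow, ← ofReal_one, ← ofReal_sub, norm_real, Real.norm_of_nonneg]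
    exact sub_nonneg.2 (pow_le_one₀ (norm_nonneg b) hb.le)
  have hsplit : ‖1 - conj b * a‖ ≤ (1 - ‖b‖ ^ 2) + ‖a - b‖ := by
    calc ‖1 - conj b * a‖ = ‖(1 - conj b * b) + conj b * (b - a)‖ := by ring_nf
      _ ≤ ‖1 - conj b * b‖ + ‖conj b * (b - a)‖ := norm_add_le _ _
      _ ≤ (1 - ‖b‖ ^ 2) + ‖a - b‖ := by
        rw [hbb, norm_mul, Complex.norm_conj, norm_sub_rev b a]
        nlinarith [norm_nonneg (a - b)]
  have : ‖a - b‖ ≤ β * ((1 - ‖b‖ ^ 2) + ‖a - b‖) := by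
    calc ‖a - b‖ = pseudoHypDist a b * ‖1 - conj b * a‖ := by
          rw [pseudoHypDist_eq_div, div_mul_cancel₀ _ hden.ne']
      _ ≤ β * ((1 - ‖b‖ ^ 2) + ‖a - b‖) :=
          mul_le_mul h hsplit (norm_nonneg _) hβ0
  rw [le_div_iff₀ (sub_pos.2 hβ)]
  linarith

lemma mapsTo_leftComp {fseq : ℕ → ℂ → ℂ} {s : Set ℂ} (hfseq : ∀ n, MapsTo (fseq n) s s) :
    ∀ n, MapsTo (leftComp fseq n) s s
  | 0 => mapsTo_id s
  | n + 1 => (hfseq n).comp (mapsTo_leftComp hfseq n)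

lemma pseudoHypDist_leftComp_le {fseq : ℕ → ℂ → ℂ}
    (hd : ∀ n, DifferentiableOn ℂ (fseq n) unitDisc) (hm : ∀ n, MapsTo (fseq n) unitDisc unitDisc)
    {z w : ℂ} (hz : ‖z‖ < 1) (hw : ‖w‖ < 1) :
    ∀ n, pseudoHypDist (leftComp fseq n z) (leftComp fseq n w) ≤ pseudoHypDist z w
  | 0 => le_rfl
  | n + 1 => (pseudoHypDist_le_of_mapsTo (hd n) (hm n) (mapsTo_leftComp hm n hz)
      (mapsTo_leftComp hm n hw)).trans (pseudoHypDist_leftComp_le hd hm hz hw n)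

lemma pseudoHypDist_leftComp_iterate_le {f : ℂ → ℂ} {fseq : ℕ → ℂ → ℂ}
    (hf : DifferentiableOn ℂ f unitDisc) (hfmap : MapsTo f unitDisc unitDisc)
    (hm : ∀ n, MapsTo (fseq n) unitDisc unitDisc) {z : ℂ} (hz : ‖z‖ < 1)
    (hclose : ∀ n, ∀ w ∈ unitDisc, pseudoHypDist w (f^[n] z) ≤ 1 / 4 →
      pseudoHypDist (fseq n w) (f w) ≤ (1 / 2) ^ n / 16) :
    ∀ n, pseudoHypDist (leftComp fseq n z) (f^[n] z) ≤ 1 / 4 - (1 / 2) ^ n / 4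
  | 0 => by simp [leftComp, pseudoHypDist_self]
  | n + 1 => by
    set w := leftComp fseq n z
    have hw : ‖w‖ < 1 := mapsTo_leftComp hm n hz
    have horbit : ‖f^[n] z‖ < 1 := hfmap.iterate n hz
    have hq : (0 : ℝ) < (1 / 2) ^ n := by positivity
    have ih := pseudoHypDist_leftComp_iterate_le hf hfmap hm hz hclose n
    have hu := hclose n w hw (ih.trans (by linarith))
    have hv : pseudoHypDist (f w) (f^[n + 1] z) ≤ 1 / 4 - (1 / 2) ^ n / 4 := by
      rw [Function.iterate_succ_apply']
      exact (pseudoHypDist_le_of_mapsTo hf hfmap hw horbit).trans ih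
    have hu0 := pseudoHypDist_nonneg (fseq n w) (f w)
    have hv0 := pseudoHypDist_nonneg (f w) (f^[n + 1] z)
    refine (pseudoHypDist_triangle (hm n hw) (hfmap hw) (hfmap.iterate (n + 1) hz)).trans ?_
    rw [div_le_iff₀ (by nlinarith), pow_succ]
    have hq1 : ((1 : ℝ) / 2) ^ n ≤ 1 := pow_le_one₀ (by norm_num) (by norm_num)
    nlinarith [mul_le_mul hu hv hv0 (by positivity), mul_nonneg (mul_nonneg hu0 hv0) hq.le]

lemma tendstoUniformlyOn_of_pseudoHypDist_le {ι : Type*} {l : Filter ι} {G : ι → ℂ → ℂ}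
    {a : ι → ℂ} {s : Set ℂ} {ζ : ℂ} {β : ℝ} (hζ : ‖ζ‖ = 1) (ha : Tendsto a l (𝓝 ζ))
    (ha1 : ∀ i, ‖a i‖ < 1) (hG1 : ∀ i, ∀ z ∈ s, ‖G i z‖ < 1) (hβ : β < 1)
    (hG : ∀ i, ∀ z ∈ s, pseudoHypDist (G i z) (a i) ≤ β) :
    TendstoUniformlyOn G (fun _ => ζ) l s := by
  set bound := fun i => β * (1 - ‖a i‖ ^ 2) / (1 - β) + ‖a i - ζ‖
  have hbound : Tendsto bound l (𝓝 0) := by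
    have := ((((ha.norm.pow 2).const_sub 1).const_mul β).div_const (1 - β)).add
      (ha.sub_const ζ).norm
    simpa [hζ] using this
  rw [Metric.tendstoUniformlyOn_iff]
  intro ε hε
  filter_upwards [hbound.eventually_lt_const hε] with i hi z hz
  calc dist ζ (G i z) = ‖(G i z - a i) + (a i - ζ)‖ := by rw [dist_comm, dist_eq_norm]; ring_nf
    _ ≤ ‖G i z - a i‖ + ‖a i - ζ‖ := norm_add_le _ _
    _ ≤ bound i := add_le_add_left
        (norm_sub_le_of_pseudoHypDist_le (hG1 i z hz) (ha1 i) hβ (hG i z hz)) _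
    _ < ε := hi

lemma exists_isCompact_pseudoHypDist_le_of_dist_lt {f : ℂ → ℂ} (hf : ContinuousOn f unitDisc)
    (hfmap : MapsTo f unitDisc unitDisc) {b : ℂ} (hb : ‖b‖ < 1) {δ : ℝ} (hδ : 0 < δ) :
    ∃ K ⊆ unitDisc, IsCompact K ∧ ∃ ε > 0, ∀ g : ℂ → ℂ, MapsTo g unitDisc unitDisc →
      (∀ z ∈ K, dist (g z) (f z) < ε) →
      ∀ w ∈ unitDisc, pseudoHypDist w b ≤ 1 / 4 → pseudoHypDist (g w) (f w) ≤ δ := by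
  -- `closedBall 0 R` contains the `ρ`-ball of radius `1/4` around `b`, see `hwR` below.
  set R := ‖b‖ + (1 - ‖b‖ ^ 2) / 3 with hRdef
  have hR : closedBall 0 R ⊆ unitDisc := fun z hz => by
    have : ‖z‖ ≤ R := mem_closedBall_zero_iff.1 hz
    show ‖z‖ < 1
    nlinarith [norm_nonneg b, hRdef]
  have hfR : f '' closedBall 0 R ⊆ ball 0 1 := by
    rintro _ ⟨z, hz, rfl⟩
    exact unitDisc_eq_ball ▸ hfmap (hR hz)
  obtain ⟨s, hs, hfs⟩ := exists_lt_subset_ball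
    ((isCompact_closedBall 0 R).image_of_continuousOn (hf.mono hR)).isClosed hfR
  refine ⟨closedBall 0 R, hR, isCompact_closedBall 0 R, δ * (1 - s),
    mul_pos hδ (sub_pos.2 hs), fun g hg hgf w hw hwb => ?_⟩
  have hwR : w ∈ closedBall 0 R := by
    have : ‖w - b‖ ≤ (1 - ‖b‖ ^ 2) / 3 :=
      (norm_sub_le_of_pseudoHypDist_le hw hb (by norm_num) hwb).trans_eq (by ring)
    rw [mem_closedBall_zero_iff]
    linarith [norm_le_norm_add_norm_sub' w b, hRdef]
  have hfw : ‖f w‖ < s := mem_ball_zero_iff.1 (hfs (mem_image_of_mem f hwR))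
  calc pseudoHypDist (g w) (f w) ≤ ‖g w - f w‖ / (1 - ‖f w‖) :=
        pseudoHypDist_le_norm_sub_div (hg hw).le (hfmap hw)
    _ ≤ ‖g w - f w‖ / (1 - s) :=
        div_le_div_of_nonneg_left (norm_nonneg _) (by linarith) (by linarith)
    _ ≤ δ := by
        rw [div_le_iff₀ (by linarith), ← dist_eq_norm]
        exact (hgf w hwR).le

/-- The neighbourhoods `𝒰ₙ` are the basic compact-open neighbourhoods
`{g | ∀ z ∈ K n, dist (g z) (f z) < ε n}`. -/
theorem stability_DW_boundary_left
    (f : ℂ → ℂ) (ζ : ℂ)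
    (hf : DifferentiableOn ℂ f unitDisc) (hfmap : MapsTo f unitDisc unitDisc)
    (hζ : ‖ζ‖ = 1)
    (hDW : TendstoLocallyUniformlyOn (fun n z => f^[n] z) (fun _ => ζ) atTop unitDisc) :
    ∃ K : ℕ → Set ℂ, ∃ ε : ℕ → ℝ,
      (∀ n, IsCompact (K n) ∧ K n ⊆ unitDisc ∧ 0 < ε n) ∧
      ∀ fseq : ℕ → ℂ → ℂ,
        (∀ n, DifferentiableOn ℂ (fseq n) unitDisc ∧ MapsTo (fseq n) unitDisc unitDisc ∧
          ∀ z ∈ K n, dist (fseq n z) (f z) < ε n) →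
        TendstoLocallyUniformlyOn (leftComp fseq) (fun _ => ζ) atTop unitDisc := by
  have h0 : (0 : ℂ) ∈ unitDisc := by simp [unitDisc]
  have horbit : ∀ n, ‖f^[n] 0‖ < 1 := fun n => hfmap.iterate n h0
  choose K hKsub hK ε hε hclose using fun n =>
    exists_isCompact_pseudoHypDist_le_of_dist_lt hf.continuousOn hfmap (horbit n)
      (by positivity : (0 : ℝ) < (1 / 2) ^ n / 16)
  refine ⟨K, ε, fun n => ⟨hK n, hKsub n, hε n⟩, fun fseq hfseq => ?_⟩
  have hm n : MapsTo (fseq n) unitDisc unitDisc := (hfseq n).2.1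
  have hFmap n : MapsTo (leftComp fseq n) unitDisc unitDisc := mapsTo_leftComp hm n
  have hshadow n : pseudoHypDist (leftComp fseq n 0) (f^[n] 0) ≤ 1 / 4 :=
    (pseudoHypDist_leftComp_iterate_le hf hfmap hm h0
      (fun n => hclose n (fseq n) (hm n) (hfseq n).2.2) n).trans (by
        linarith [(by positivity : (0 : ℝ) ≤ (1 / 2) ^ n)])
  have hbase : Tendsto (fun n => leftComp fseq n 0) atTop (𝓝 ζ) :=
    (tendstoUniformlyOn_of_pseudoHypDist_le (G := fun n _ => leftComp fseq n 0) (s := univ)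
      hζ (hDW.tendsto_at h0) horbit (fun n _ _ => hFmap n h0) (by norm_num)
      (fun n _ _ => hshadow n)).tendsto_at (mem_univ 0)
  rw [tendstoLocallyUniformlyOn_iff_forall_isCompact (unitDisc_eq_ball ▸ isOpen_ball)]
  intro C hC hCc
  obtain ⟨r, hr, hCr⟩ := exists_lt_subset_ball hCc.isClosed (unitDisc_eq_ball ▸ hC)
  refine tendstoUniformlyOn_of_pseudoHypDist_le hζ hbase (fun n => hFmap n h0)
    (fun n z hz => hFmap n (hC hz)) hr fun n z hz => ?_
  calc pseudoHypDist (leftComp fseq n z) (leftComp fseq n 0) ≤ pseudoHypDist z 0 :=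
        pseudoHypDist_leftComp_le (fun n => (hfseq n).1) hm (hC hz) h0 n
    _ ≤ r := by simpa [pseudoHypDist_zero_right] using (mem_ball_zero_iff.1 (hCr hz)).le
end

section
/- Let 0 < δ < 1/2. Then there exists a sequence of real numbers θ₁, θ₂, … such that each fₙ(z) = z/2 + δ·e^{iθₙ} is a holomorphic self-map of the open unit disc 𝔻, the sequence (fₙ) converges locally uniformly on 𝔻 to f(z) = z/2 (indeed each fₙ lies within hyperbolic distance bounds determined by δ of f), and for every z ∈ 𝔻 the sequence (Fₙ(z)) of left compositions Fₙ = fₙ ∘ fₙ₋₁ ∘ ⋯ ∘ f₁ does not converge. -/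
open Complex Set Filter Metric

/-! With `θₙ = nπ` the translations are `δ(-1)ⁿ`. If the left compositions converged to `L`,
then `δ(-1)ⁿ = Fₙ₊₁(z) - Fₙ(z)/2` would converge to `L/2`, which an alternating sequence
with `δ ≠ 0` cannot do. -/

theorem norm_ofReal_mul_exp_I_mul {δ : ℝ} (hδ : 0 ≤ δ) (θ : ℝ) :
    ‖(δ : ℂ) * exp (I * θ)‖ = δ := by
  rw [norm_mul, mul_comm I, norm_exp_ofReal_mul_I, mul_one, norm_real, Real.norm_of_nonneg hδ]

theorem exp_I_mul_nat_mul_pi (n : ℕ) : exp (I * ((n * Real.pi : ℝ) : ℂ)) = (-1) ^ n := by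
  rw [ofReal_mul, ofReal_natCast, show I * (n * Real.pi) = n * (Real.pi * I) by ring,
    exp_nat_mul, exp_pi_mul_I]

theorem mapsTo_half_add_unitDisc {c : ℂ} (hc : ‖c‖ ≤ 1 / 2) :
    MapsTo (fun z => z / 2 + c) unitDisc unitDisc := by
  intro z (hz : ‖z‖ < 1)
  show ‖z / 2 + c‖ < 1
  calc ‖z / 2 + c‖ ≤ ‖z‖ / 2 + ‖c‖ := by simpa using norm_add_le (z / 2) c
    _ < 1 := by linarith

theorem tendsto_of_tendsto_leftComp_add {g : ℂ → ℂ} (hg : Continuous g) {b : ℕ → ℂ}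
    {z L : ℂ} (h : Tendsto (fun n => leftComp (fun k w => g w + b k) n z) atTop (nhds L)) :
    Tendsto b atTop (nhds (L - g L)) := by
  refine ((h.comp (tendsto_add_atTop_nat 1)).sub ((hg.tendsto L).comp h)).congr fun n => ?_
  simp [leftComp]

theorem not_tendsto_mul_neg_one_pow {K : Type*} [Field K] [CharZero K] [TopologicalSpace K]
    [T2Space K] {c L : K} (hc : c ≠ 0) :
    ¬ Tendsto (fun n : ℕ => c * (-1) ^ n) atTop (nhds L) := by
  intro h
  have hdouble : Tendsto (fun n : ℕ => 2 * n) atTop atTop :=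
    tendsto_id.const_mul_atTop' two_pos
  have heven : Tendsto (fun n : ℕ => c * (-1) ^ (2 * n)) atTop (nhds L) := h.comp hdouble
  have hodd : Tendsto (fun n : ℕ => c * (-1) ^ (2 * n + 1)) atTop (nhds L) :=
    h.comp ((tendsto_add_atTop_nat 1).comp hdouble)
  simp only [pow_add, pow_one, pow_mul, neg_one_sq, one_pow, mul_one, mul_neg_one,
    tendsto_const_nhds_iff] at heven hodd
  exact hc (by linear_combination (heven - hodd) / 2)

/-- **Example 2.** For any 0 < δ < 1/2 there are angles θₙ such that the maps
fₙ(z) = z/2 + δe^{iθₙ} are holomorphic self-maps of 𝔻, each lying within (Euclidean,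
hence hyperbolic) distance determined by δ of f(z) = z/2 on 𝔻, yet the left
compositions Fₙ = fₙ ∘ ⋯ ∘ f₁ diverge pointwise on 𝔻. (Indices are shifted: `θ k`
is the angle of f_{k+1}.) -/
theorem left_composition_instability_example
    (δ : ℝ) (hδ0 : 0 < δ) (hδ : δ < 1 / 2) :
    ∃ θ : ℕ → ℝ,
      (∀ n, MapsTo (fun z => z / 2 + (δ : ℂ) * Complex.exp (Complex.I * (θ n : ℂ)))
        unitDisc unitDisc) ∧
      (∀ n, DifferentiableOn ℂ (fun z => z / 2 + (δ : ℂ) * Complex.exp (Complex.I * (θ n : ℂ)))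
        unitDisc) ∧
      (∀ n, ∀ z ∈ unitDisc,
        dist (z / 2 + (δ : ℂ) * Complex.exp (Complex.I * (θ n : ℂ))) (z / 2) ≤ δ) ∧
      (∀ z ∈ unitDisc,
        ¬ ∃ L : ℂ, Tendsto
          (fun n => leftComp (fun k w => w / 2 + (δ : ℂ) * Complex.exp (Complex.I * (θ k : ℂ))) n z)
          atTop (nhds L)) := by
  have hnorm : ∀ θ : ℝ, ‖(δ : ℂ) * exp (I * θ)‖ = δ := norm_ofReal_mul_exp_I_mul hδ0.le
  refine ⟨fun n => n * Real.pi,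
    fun n => mapsTo_half_add_unitDisc (by linarith [hnorm (n * Real.pi)]), fun n => by fun_prop,
    fun n z _ => by rw [dist_self_add_left, hnorm], ?_⟩
  rintro z - ⟨L, hL⟩
  have htranslations := tendsto_of_tendsto_leftComp_add (continuous_id.div_const 2) hL
  simp only [exp_I_mul_nat_mul_pi] at htranslations
  exact not_tendsto_mul_neg_one_pow (ofReal_ne_zero.2 hδ0.ne') htranslations
end
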